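/- Let F be a field and G = ([n], E) a labelled simple graph with n ≥ 1, with 𝒜_G ≤ Λ(n,F) the alternating matrix space spanned by the elementary alternating matrices A_{i,j} for {i,j} ∈ E. Then the chromatic number of G equals the totally-isotropic decomposition number of 𝒜_G, i.e., χ(G) = χ(𝒜_G). -/

import Mathlib

open Matrix BigOperators

/-- The elementary alternating matrix `A_{i,j}`. -/
def elemAlt (n : ℕ) (F : Type) [Field F] (i j : Fin n) : Matrix (Fin n) (Fin n) F :=
  Matrix.single i j 1 - Matrix.single j i 1

/-- The alternating matrix space `𝒜_G` spanned by the elementary alternating matrices of the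
edges of a graph `G`. -/
def graphSpace (n : ℕ) (F : Type) [Field F] (G : SimpleGraph (Fin n)) :
    Submodule F (Matrix (Fin n) (Fin n) F) :=
  Submodule.span F {A | ∃ i j, G.Adj i j ∧ A = elemAlt n F i j}

/-!
Since `u ⬝ᵥ A_{v,w} *ᵥ u' = u v * u' w - u w * u' v`, a subspace is totally isotropic for `𝒜_G`
iff all its `2 × 2` minors on edges `{v, w}` vanish. Hence the coordinate subspaces supported on
the colour classes of a proper colouring are totally isotropic, and they decompose `Fⁿ`.

Conversely, if `Fⁿ = ∑ₖ Uₖ` with every `Uₖ` totally isotropic, colour the vertices greedily: for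
the next vertex `v` pick `k` and `x_v ∈ Uₖ` with `x_v v ≠ 0`, then replace `Uₖ` by its vectors
vanishing at `v`. The sum of the current subspaces still surjects onto the coordinates not yet
processed, so the process runs to the end, and two vertices `v, w` of the same colour satisfy
`x_v w * x_w v = 0`. If they were adjacent, isotropy would give `x_v v * x_w w = 0`.
-/

open Function

section SpansOn

variable {V ι F : Type} [Fintype ι] [Field F]

def SpansOn (X : ι → Submodule F (V → F)) (R : Set V) : Prop :=
  ∀ y : V → F, ∃ g : ι → V → F, (∀ k, g k ∈ X k) ∧ ∀ w ∈ R, ∑ k, g k w = y w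

theorem spansOn_univ_of_iSup_eq_top {X : ι → Submodule F (V → F)} (hX : ⨆ k, X k = ⊤) :
    SpansOn X Set.univ := by
  intro y
  obtain ⟨g, hg⟩ := (Submodule.mem_iSup_finset_iff_exists_sum (s := .univ) X y).mp
    (by simp only [Finset.mem_univ, iSup_true, hX]; trivial)
  exact ⟨fun k => g k, fun k => (g k).2, fun w _ => by rw [← hg, Finset.sum_apply]⟩

variable {X : ι → Submodule F (V → F)}

section Greedy

variable [DecidableEq V] [DecidableEq ι]

theorem SpansOn.exists_update_inf_ker {R : Set V} {v : V} (hX : SpansOn X (insert v R))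
    (hv : v ∉ R) : ∃ k, ∃ x ∈ X k, x v ≠ 0 ∧
      SpansOn (update X k (X k ⊓ LinearMap.ker (LinearMap.proj v))) R := by
  obtain ⟨g, hgX, hg⟩ := hX (Pi.single v 1)
  obtain ⟨k, -, hk⟩ : ∃ k ∈ Finset.univ, g k v ≠ 0 :=
    Finset.exists_ne_zero_of_sum_ne_zero (by simp [hg v (Set.mem_insert v R)])
  refine ⟨k, g k, hgX k, hk, fun y => ?_⟩
  obtain ⟨h, hhX, hh⟩ := hX y
  -- `g` sums to zero on `R`, so subtracting a multiple of it keeps the sums on `R` while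
  -- killing the `v`-coordinate of `h k`
  let c := h k v / g k v
  have hmem : ∀ l, h l - c • g l ∈ X l := fun l =>
    sub_mem (hhX l) (Submodule.smul_mem _ _ (hgX l))
  refine ⟨h - c • g, fun l => ?_, fun w hw => ?_⟩
  · rcases eq_or_ne l k with rfl | hl
    · rw [update_self]
      exact ⟨hmem l, by simp [c, hk]⟩
    · rw [update_of_ne hl]
      exact hmem l
  · have hwv : w ≠ v := fun h => hv (h ▸ hw)
    have hg0 : ∑ l, g l w = 0 := by simpa [hwv] using hg w (Set.mem_insert_of_mem v hw)
    simp [Finset.sum_sub_distrib, ← Finset.mul_sum, hg0, hh w (Set.mem_insert_of_mem v hw)]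

theorem SpansOn.exists_triangular [Nonempty ι] {R : Finset V} (hX : SpansOn X R) :
    ∃ (f : V → ι) (x : V → V → F), (∀ v ∈ R, x v ∈ X (f v) ∧ x v v ≠ 0) ∧
      ∀ v ∈ R, ∀ w ∈ R, v ≠ w → f v = f w → x v w * x w v = 0 := by
  induction R using Finset.induction_on generalizing X with
  | empty => exact ⟨fun _ => Classical.arbitrary ι, 0, by simp, by simp⟩
  | insert a s ha ih =>
    rw [Finset.coe_insert] at hX
    obtain ⟨k, y, hyX, hya, hX'⟩ := hX.exists_update_inf_ker (Finset.mem_coe.not.mpr ha)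
    obtain ⟨f, x, hx, hxx⟩ := ih hX'
    have hX'le : ∀ l, update X k (X k ⊓ LinearMap.ker (LinearMap.proj a)) l ≤ X l := by
      intro l
      rcases eq_or_ne l k with rfl | hl
      · simp
      · simp [hl]
    have hxa : ∀ w ∈ s, f w = k → x w a = 0 := by
      intro w hw hfw
      have hxw := (hx w hw).1
      rw [hfw, update_self] at hxw
      exact hxw.2
    refine ⟨update f a k, update x a y, fun v hv => ?_, fun v hv w hw hvw hf => ?_⟩
    · rcases Finset.mem_insert.mp hv with rfl | hvs
      · simpa using ⟨hyX, hya⟩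
      · have hva : v ≠ a := ne_of_mem_of_not_mem hvs ha
        simpa [hva] using ⟨hX'le _ (hx v hvs).1, (hx v hvs).2⟩
    · rcases Finset.mem_insert.mp hv with rfl | hvs <;>
        rcases Finset.mem_insert.mp hw with rfl | hws
      · exact absurd rfl hvw
      · have hwa : w ≠ v := ne_of_mem_of_not_mem hws ha
        simp only [update_self, update_of_ne hwa] at hf ⊢
        rw [hxa w hws hf.symm, mul_zero]
      · have hvw : v ≠ w := ne_of_mem_of_not_mem hvs ha
        simp only [update_self, update_of_ne hvw] at hf ⊢
        rw [hxa v hvs hf, zero_mul]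
      · have hva : v ≠ a := ne_of_mem_of_not_mem hvs ha
        have hwa : w ≠ a := ne_of_mem_of_not_mem hws ha
        simpa [hva, hwa] using hxx v hvs w hws hvw (by simpa [hva, hwa] using hf)

end Greedy

theorem SpansOn.nonempty_coloring [Finite V] {G : SimpleGraph V} (hX : SpansOn X Set.univ)
    (hiso : ∀ k, ∀ x ∈ X k, ∀ y ∈ X k, ∀ v w, G.Adj v w → x v * y w = x w * y v) :
    Nonempty (G.Coloring ι) := by
  classical
  have := Fintype.ofFinite V
  rcases isEmpty_or_nonempty ι with hι | hι
  · have : IsEmpty V := ⟨fun v => by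
      obtain ⟨g, -, hg⟩ := hX (Pi.single v 1)
      simpa using hg v trivial⟩
    exact ⟨.ofIsEmpty⟩
  obtain ⟨f, x, hx, hxx⟩ := SpansOn.exists_triangular (R := .univ) (by simpa using hX)
  refine ⟨.mk f fun {v w} hvw hf => ?_⟩
  obtain ⟨hxv, hxvv⟩ := hx v (Finset.mem_univ v)
  obtain ⟨hxw, hxww⟩ := hx w (Finset.mem_univ w)
  have h := hiso (f v) (x v) hxv (x w) (hf ▸ hxw) v w hvw
  rw [hxx v (Finset.mem_univ v) w (Finset.mem_univ w) hvw.ne hf] at h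
  exact mul_ne_zero hxvv hxww h

end SpansOn

section Isotropic

variable {V F : Type} [Fintype V] [Field F]

def IsTotallyIsotropic (𝒜 : Submodule F (Matrix V V F)) (U : Submodule F (V → F)) : Prop :=
  ∀ u ∈ U, ∀ u' ∈ U, ∀ A ∈ 𝒜, u ⬝ᵥ A *ᵥ u' = 0

theorem isTotallyIsotropic_span_iff {S : Set (Matrix V V F)} {U : Submodule F (V → F)} :
    IsTotallyIsotropic (Submodule.span F S) U ↔
      ∀ u ∈ U, ∀ u' ∈ U, ∀ A ∈ S, u ⬝ᵥ A *ᵥ u' = 0 := by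
  refine ⟨fun h u hu u' hu' A hA => h u hu u' hu' A (Submodule.subset_span hA),
    fun h u hu u' hu' A hA => ?_⟩
  induction hA using Submodule.span_induction with
  | mem A hA => exact h u hu u' hu' A hA
  | zero => simp
  | add A B _ _ hA hB => rw [add_mulVec, dotProduct_add, hA, hB, add_zero]
  | smul a A _ hA => rw [smul_mulVec, dotProduct_smul, hA, smul_zero]

end Isotropic

theorem dotProduct_elemAlt_mulVec {n : ℕ} {F : Type} [Field F] (i j : Fin n) (x y : Fin n → F) :
    x ⬝ᵥ elemAlt n F i j *ᵥ y = x i * y j - x j * y i := by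
  simp only [elemAlt, sub_mulVec, dotProduct_sub, single_mulVec_eq, dotProduct_smul,
    dotProduct_single_one, smul_eq_mul, one_mul]
  ring

theorem isTotallyIsotropic_graphSpace_iff {n : ℕ} {F : Type} [Field F] {G : SimpleGraph (Fin n)}
    {U : Submodule F (Fin n → F)} : IsTotallyIsotropic (graphSpace n F G) U ↔
      ∀ u ∈ U, ∀ u' ∈ U, ∀ v w, G.Adj v w → u v * u' w = u w * u' v := by
  rw [graphSpace, isTotallyIsotropic_span_iff]
  refine forall₄_congr fun u _ u' _ => ⟨fun h v w hvw => ?_, ?_⟩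
  · rw [← sub_eq_zero, ← dotProduct_elemAlt_mulVec]
    exact h _ ⟨v, w, hvw, rfl⟩
  · rintro h _ ⟨v, w, hvw, rfl⟩
    rw [dotProduct_elemAlt_mulVec, h v w hvw, sub_self]

def supportedOn {V : Type} (F : Type) [Field F] (s : Set V) : Submodule F (V → F) :=
  Submodule.pi sᶜ fun _ => ⊥

section Supported

variable {V ι F : Type} [Field F]

theorem mem_supportedOn {s : Set V} {u : V → F} : u ∈ supportedOn F s ↔ ∀ v ∉ s, u v = 0 := by
  simp [supportedOn, Submodule.mem_pi]

theorem supportedOn_mono {s t : Set V} (h : s ⊆ t) : supportedOn F s ≤ supportedOn F t :=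
  fun _ hu => mem_supportedOn.mpr fun v hv => mem_supportedOn.mp hu v (fun hs => hv (h hs))

theorem disjoint_supportedOn_compl (s : Set V) :
    Disjoint (supportedOn F s) (supportedOn F sᶜ) := by
  rw [Submodule.disjoint_def]
  intro u hs hsc
  funext v
  by_cases hv : v ∈ s
  · exact mem_supportedOn.mp hsc v (not_not.mpr hv)
  · exact mem_supportedOn.mp hs v hv

theorem isInternal_supportedOn_fiber [Fintype ι] [DecidableEq ι] (C : V → ι) :
    DirectSum.IsInternal fun k => supportedOn F (C ⁻¹' {k}) := by
  rw [DirectSum.isInternal_submodule_iff_iSupIndep_and_iSup_eq_top]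
  refine ⟨fun k => (disjoint_supportedOn_compl _).mono_right ?_, eq_top_iff.mpr fun u _ => ?_⟩
  · exact iSup₂_le fun j hj => supportedOn_mono fun v hv hvk => hj (hv.symm.trans hvk)
  · have hu : u = ∑ k, fun v => if C v = k then u v else 0 := by
      funext v
      simp
    rw [hu]
    refine Submodule.sum_mem _ fun k _ => Submodule.mem_iSup_of_mem k ?_
    exact mem_supportedOn.mpr fun v hv => if_neg hv

end Supported

theorem SimpleGraph.IsIndepSet.isTotallyIsotropic_supportedOn {n : ℕ} {F : Type} [Field F]
    {G : SimpleGraph (Fin n)} {s : Set (Fin n)} (hs : G.IsIndepSet s) :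
    IsTotallyIsotropic (graphSpace n F G) (supportedOn F s) := by
  refine isTotallyIsotropic_graphSpace_iff.mpr fun u hu u' hu' v w hvw => ?_
  by_cases hv : v ∈ s
  · have hw : w ∉ s := fun hw => hs hv hw hvw.ne hvw
    rw [mem_supportedOn.mp hu w hw, mem_supportedOn.mp hu' w hw, mul_zero, zero_mul]
  · rw [mem_supportedOn.mp hu v hv, mem_supportedOn.mp hu' v hv, mul_zero, zero_mul]

def IsTotallyIsotropicDecomposition {V ι F : Type} [Fintype V] [DecidableEq ι] [Field F]
    (𝒜 : Submodule F (Matrix V V F)) (U : ι → Submodule F (V → F)) : Prop :=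
  DirectSum.IsInternal U ∧ (∀ k, U k ≠ ⊥) ∧ ∀ k, IsTotallyIsotropic 𝒜 (U k)

noncomputable def totallyIsotropicDecompositionNumber {V F : Type} [Fintype V] [Field F]
    (𝒜 : Submodule F (Matrix V V F)) : ℕ :=
  sInf {c | ∃ U : Fin c → Submodule F (V → F), IsTotallyIsotropicDecomposition 𝒜 U}

section GraphSpace

variable {n : ℕ} {ι F : Type} [DecidableEq ι] [Field F] {G : SimpleGraph (Fin n)}

theorem IsTotallyIsotropicDecomposition.nonempty_coloring [Fintype ι]
    {U : ι → Submodule F (Fin n → F)} (hU : IsTotallyIsotropicDecomposition (graphSpace n F G) U) :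
    Nonempty (G.Coloring ι) :=
  (spansOn_univ_of_iSup_eq_top hU.1.submodule_iSup_eq_top).nonempty_coloring fun k =>
    isTotallyIsotropic_graphSpace_iff.mp (hU.2.2 k)

theorem SimpleGraph.Coloring.isTotallyIsotropicDecomposition [Fintype ι] (C : G.Coloring ι)
    (hC : Function.Surjective C) :
    IsTotallyIsotropicDecomposition (graphSpace n F G) fun k => supportedOn F (C ⁻¹' {k}) := by
  refine ⟨isInternal_supportedOn_fiber C, fun k => ?_,
    fun k => (C.isIndepSet_colorClass k).isTotallyIsotropic_supportedOn⟩
  obtain ⟨v, rfl⟩ := hC k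
  refine Submodule.ne_bot_iff _ |>.mpr ⟨Pi.single v 1, mem_supportedOn.mpr fun w hw => ?_, by simp⟩
  exact Pi.single_eq_of_ne (by rintro rfl; exact hw rfl) 1

end GraphSpace

theorem chromatic_eq_isotropic_decomposition_number_general (n : ℕ)
    (F : Type) [Field F] (G : SimpleGraph (Fin n)) :
    G.chromaticNumber =
      ((sInf {c : ℕ | ∃ U : Fin c → Submodule F (Fin n → F),
        DirectSum.IsInternal U ∧ (∀ i, U i ≠ ⊥) ∧
        ∀ i, ∀ u ∈ U i, ∀ u' ∈ U i, ∀ A ∈ graphSpace n F G,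
          u ⬝ᵥ A *ᵥ u' = 0} : ℕ) : ℕ∞) := by
  change G.chromaticNumber = (totallyIsotropicDecompositionNumber (graphSpace n F G) : ℕ∞)
  obtain ⟨m, hm⟩ := ENat.ne_top_iff_exists.mp
    (G.chromaticNumber_le_card.trans_lt (ENat.natCast_lt_top _)).ne
  have hcol : G.Colorable m := G.chromaticNumber_le_iff_colorable.mp hm.ge
  have hsurj := (G.chromaticNumber_eq_iff_forall_surjective hcol).mp hm.symm
  obtain ⟨C⟩ := hcol
  have hdec := C.isTotallyIsotropicDecomposition (F := F) (hsurj C)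
  rw [← hm, Nat.cast_inj]
  refine le_antisymm (le_csInf ⟨m, _, hdec⟩ fun c ⟨U, hU⟩ => ?_) (Nat.sInf_le ⟨_, hdec⟩)
  have hχ := G.chromaticNumber_le_iff_colorable.mpr hU.nonempty_coloring
  rwa [← hm, Nat.cast_le] at hχ

/-- The chromatic number of `G` equals the totally-isotropic decomposition number of `𝒜_G`:
the least `c` such that `Fⁿ` decomposes as a direct sum of `c` nonzero totally-isotropic
subspaces of `𝒜_G`. -/
theorem chromatic_eq_isotropic_decomposition_number (n : ℕ) (hn : 1 ≤ n)
    (F : Type) [Field F] (G : SimpleGraph (Fin n)) :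
    G.chromaticNumber =
      ((sInf {c : ℕ | ∃ U : Fin c → Submodule F (Fin n → F),
        DirectSum.IsInternal U ∧ (∀ i, U i ≠ ⊥) ∧
        ∀ i, ∀ u ∈ U i, ∀ u' ∈ U i, ∀ A ∈ graphSpace n F G,
          u ⬝ᵥ A *ᵥ u' = 0} : ℕ) : ℕ∞) :=
  chromatic_eq_isotropic_decomposition_number_general n F G
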